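/- arXiv:2304.11050 — 6 statements merged into one kernel-verified Lean document; each statement's English description precedes it below -/
import Mathlib

section
/- For every complex number α, the function u_α(t,x) = α · e^{i|α|² log t} · t^{-1/2} · e^{i x²/(4t)} satisfies the focusing 1D cubic Schrödinger equation i ∂_t u + ∂_x² u + |u|² u = 0 at every point (t,x) with t > 0 and x ∈ ℝ. -/
noncomputable def uAlpha (α : ℂ) (t x : ℝ) : ℂ :=
  α * Complex.exp (Complex.I * ((‖α‖ : ℝ) : ℂ)^2 * ((Real.log t : ℝ) : ℂ)) *
    (1 / ((Real.sqrt t : ℝ) : ℂ)) * Complex.exp (Complex.I * (x : ℂ)^2 / (4 * (t : ℂ)))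

/-!
Every factor of `u_α` is an exponential or a power of `t`, so each partial derivative of `u_α` is
`u_α` times an explicit rational function of `(t, x)`, and `|u_α|² = |α|²/t`. After dividing by
`u_α`, the left-hand side of the equation becomes `(|α|²/t)(i² + 1) = 0`.
-/

open Complex

lemma hasDerivAt_one_div_sqrt_ofReal {t : ℝ} (ht : 0 < t) :
    HasDerivAt (fun s : ℝ => 1 / ((Real.sqrt s : ℝ) : ℂ))
      (-(1 / ((Real.sqrt t : ℝ) : ℂ)) / (2 * t)) t := by
  have hsqrt : ((Real.sqrt t : ℝ) : ℂ) ≠ 0 := ofReal_ne_zero.mpr (Real.sqrt_pos.mpr ht).ne'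
  have h := ((Real.hasDerivAt_sqrt ht.ne').ofReal_comp).fun_inv hsqrt
  simp only [one_div]
  refine h.congr_deriv ?_
  have hsq : ((Real.sqrt t : ℝ) : ℂ) ^ 2 = t := by
    rw [← ofReal_pow, Real.sq_sqrt ht.le]
  rw [← hsq]
  push_cast
  field_simp

lemma hasDerivAt_uAlpha_time (α : ℂ) (x : ℝ) {t : ℝ} (ht : 0 < t) :
    HasDerivAt (fun s : ℝ => uAlpha α s x)
      (uAlpha α t x * (I * (‖α‖ : ℂ) ^ 2 / t - 1 / (2 * t) - I * (x : ℂ) ^ 2 / (4 * t ^ 2))) t := by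
  have htC : (t : ℂ) ≠ 0 := ofReal_ne_zero.mpr ht.ne'
  have hlog : HasDerivAt (fun s : ℝ => I * ((‖α‖ : ℝ) : ℂ) ^ 2 * ((Real.log s : ℝ) : ℂ))
      (I * (‖α‖ : ℂ) ^ 2 / t) t := by
    refine (((Real.hasDerivAt_log ht.ne').ofReal_comp).const_mul
      (I * ((‖α‖ : ℝ) : ℂ) ^ 2)).congr_deriv ?_
    push_cast
    ring
  have hphase : HasDerivAt (fun s : ℝ => I * (x : ℂ) ^ 2 / (4 * (s : ℂ)))
      (-(I * (x : ℂ) ^ 2 / (4 * t ^ 2))) t := by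
    have h := (((hasDerivAt_id t).ofReal_comp.const_mul (4 : ℂ)).fun_inv
      (mul_ne_zero (by norm_num) htC)).const_mul (I * (x : ℂ) ^ 2)
    simp only [← div_eq_mul_inv, id, ofReal_one] at h
    refine h.congr_deriv ?_
    field_simp
  refine (((hlog.cexp.const_mul α).mul (hasDerivAt_one_div_sqrt_ofReal ht)).mul
    hphase.cexp).congr_deriv ?_
  simp only [uAlpha, Pi.mul_apply]
  ring

lemma hasDerivAt_uAlpha_space (α : ℂ) (t y : ℝ) :
    HasDerivAt (fun z : ℝ => uAlpha α t z) (uAlpha α t y * (I * y / (2 * t))) y := by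
  have hphase : HasDerivAt (fun z : ℝ => I * (z : ℂ) ^ 2 / (4 * t)) (I * y / (2 * t)) y := by
    refine ((((hasDerivAt_id y).ofReal_comp.fun_pow 2).const_mul I).div_const
      (4 * (t : ℂ))).congr_deriv ?_
    norm_num
    ring
  refine (hphase.cexp.const_mul
    (α * exp (I * ((‖α‖ : ℝ) : ℂ) ^ 2 * ((Real.log t : ℝ) : ℂ)) *
      (1 / ((Real.sqrt t : ℝ) : ℂ)))).congr_deriv ?_
  unfold uAlpha
  ring

lemma deriv_uAlpha_space (α : ℂ) (t : ℝ) :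
    deriv (fun y : ℝ => uAlpha α t y) = fun y : ℝ => uAlpha α t y * (I * y / (2 * t)) :=
  funext fun y => (hasDerivAt_uAlpha_space α t y).deriv

lemma hasDerivAt_deriv_uAlpha_space (α : ℂ) (t x : ℝ) :
    HasDerivAt (deriv fun y : ℝ => uAlpha α t y)
      (uAlpha α t x * (I * x / (2 * t)) * (I * x / (2 * t)) + uAlpha α t x * (I / (2 * t))) x := by
  rw [deriv_uAlpha_space]
  have hlin : HasDerivAt (fun y : ℝ => I * (y : ℂ) / (2 * t)) (I / (2 * t)) x := by
    simpa using ((hasDerivAt_id x).ofReal_comp.const_mul I).div_const (2 * (t : ℂ))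
  exact (hasDerivAt_uAlpha_space α t x).mul hlin

lemma norm_uAlpha (α : ℂ) (t x : ℝ) : ‖uAlpha α t x‖ = ‖α‖ / Real.sqrt t := by
  have hlog : I * ((‖α‖ : ℝ) : ℂ) ^ 2 * ((Real.log t : ℝ) : ℂ)
      = ((‖α‖ ^ 2 * Real.log t : ℝ) : ℂ) * I := by
    push_cast
    ring
  have hphase : I * (x : ℂ) ^ 2 / (4 * t) = ((x ^ 2 / (4 * t) : ℝ) : ℂ) * I := by
    push_cast
    ring
  rw [uAlpha, hlog, hphase, norm_mul, norm_mul, norm_mul, norm_exp_ofReal_mul_I,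
    norm_exp_ofReal_mul_I, norm_div, norm_one, norm_real, Real.norm_of_nonneg (Real.sqrt_nonneg t)]
  ring

lemma ofReal_norm_uAlpha_sq (α : ℂ) (x : ℝ) {t : ℝ} (ht : 0 ≤ t) :
    ((‖uAlpha α t x‖ : ℝ) : ℂ) ^ 2 = (‖α‖ : ℂ) ^ 2 / t := by
  rw [norm_uAlpha, ← ofReal_pow, div_pow, Real.sq_sqrt ht]
  push_cast
  rfl

/-- for every `α ∈ ℂ`, the explicit function
`u_α(t,x) = α e^{i|α|² log t} t^{-1/2} e^{i x²/(4t)}` solves the focusing 1D cubic NLS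
`i ∂_t u + ∂_x² u + |u|² u = 0` at every point with `t > 0`. -/
theorem stmt0 (α : ℂ) (t x : ℝ) (ht : 0 < t) :
    Complex.I * deriv (fun s : ℝ => uAlpha α s x) t
      + deriv (deriv (fun y : ℝ => uAlpha α t y)) x
      + ((‖uAlpha α t x‖ : ℝ) : ℂ)^2 * uAlpha α t x = 0 := by
  rw [(hasDerivAt_uAlpha_time α x ht).deriv, (hasDerivAt_deriv_uAlpha_space α t x).deriv,
    ofReal_norm_uAlpha_sq α x ht.le]
  linear_combination (uAlpha α t x * (‖α‖ : ℂ) ^ 2 / t) * I_sq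
end

section
/- Symmetrization identity: let B : ℤ → ℂ satisfy Σ_{k∈ℤ} |B_k| < ∞, let a : ℤ → ℝ be bounded, and let t ∈ ℝ. For (k, j₁, j₂) ∈ ℤ³ set j₃ := k − j₁ + j₂, ω := (k − j₁)(j₁ − j₂), and T(k,j₁,j₂) := e^{−i t ω} · B_{j₁} · conj(B_{j₂}) · B_{j₃} · conj(B_k). Then the family (a(k) − a(j₁) + a(j₂) − a(j₃)) · T(k,j₁,j₂), indexed by (k,j₁,j₂) ∈ ℤ³, is absolutely summable, the family a(k) · T(k,j₁,j₂) is absolutely summable with sum S, and Σ_{(k,j₁,j₂)∈ℤ³} (a(k) − a(j₁) + a(j₂) − a(j₃)) · T(k,j₁,j₂) = 2 (S − conj(S)). Moreover, every term of the left-hand sum with ω = 0 vanishes, so the left-hand sum equals the same sum restricted to triples with (k − j₁)(j₁ − j₂) ≠ 0. -/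
/-!
The four coefficients `a(k)`, `a(j₁)`, `a(j₂)`, `a(j₃)` are exchanged by the double transpositions
`k ↔ j₁, j₂ ↔ j₃`, `k ↔ j₂, j₁ ↔ j₃` and `k ↔ j₃, j₁ ↔ j₂` of the quadruple, which preserve the
constraint `k - j₁ + j₂ - j₃ = 0` and change `ω` at most by a sign. The second one leaves `T`
unchanged, while the other two exchange conjugated and unconjugated factors and so conjugate `T`.
Reindexing therefore gives `Σ a(j₂) T = S` and `Σ a(j₁) T = Σ a(j₃) T = conj S`, and these sums
converge absolutely since `|T| ≤ (Σ |B|) |B_k| |B_{j₁}| |B_{j₂}|`. A resonant triple has `k = j₁` or `j₁ = j₂`, and then the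
alternating coefficient cancels.
-/

/-- The elementary interaction term
`T(k,j₁,j₂) = e^{-i t ω} B_{j₁} conj(B_{j₂}) B_{j₃} conj(B_k)` with `j₃ = k - j₁ + j₂`
and `ω = (k - j₁)(j₁ - j₂)`. -/
noncomputable def interactionTerm (B : ℤ → ℂ) (t : ℝ) (p : ℤ × ℤ × ℤ) : ℂ :=
  Complex.exp (-Complex.I * (t : ℂ) * (((p.1 - p.2.1) * (p.2.1 - p.2.2) : ℤ) : ℂ))
    * B p.2.1 * (starRingEnd ℂ) (B p.2.2) * B (p.1 - p.2.1 + p.2.2)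
    * (starRingEnd ℂ) (B p.1)

/-- The alternating coefficient `a(k) - a(j₁) + a(j₂) - a(j₃)` with `j₃ = k - j₁ + j₂`. -/
def altCoeff (a : ℤ → ℝ) (p : ℤ × ℤ × ℤ) : ℝ :=
  a p.1 - a p.2.1 + a p.2.2 - a (p.1 - p.2.1 + p.2.2)

open scoped ComplexConjugate

lemma norm_interactionTerm (B : ℤ → ℂ) (t : ℝ) (p : ℤ × ℤ × ℤ) :
    ‖interactionTerm B t p‖
      = ‖B p.2.1‖ * ‖B p.2.2‖ * ‖B (p.1 - p.2.1 + p.2.2)‖ * ‖B p.1‖ := by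
  have h_phase : ‖Complex.exp (-Complex.I * t * (((p.1 - p.2.1) * (p.2.1 - p.2.2) : ℤ) : ℂ))‖
      = 1 := by
    rw [Complex.norm_exp]
    simp [Complex.mul_re]
  simp only [interactionTerm, norm_mul, h_phase, one_mul, RCLike.norm_conj]

lemma summable_norm_interactionTerm {B : ℤ → ℂ} (hB : Summable fun k => ‖B k‖) (t : ℝ) :
    Summable fun p : ℤ × ℤ × ℤ => ‖interactionTerm B t p‖ := by
  have h_triple : Summable fun p : ℤ × ℤ × ℤ => ‖B p.1‖ * (‖B p.2.1‖ * ‖B p.2.2‖) :=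
    hB.mul_of_nonneg (hB.mul_of_nonneg hB (fun _ => norm_nonneg _) fun _ => norm_nonneg _)
      (fun _ => norm_nonneg _) fun _ => by positivity
  refine .of_nonneg_of_le (fun _ => norm_nonneg _) (fun p => ?_) (h_triple.mul_left (∑' k, ‖B k‖))
  rw [norm_interactionTerm]
  calc ‖B p.2.1‖ * ‖B p.2.2‖ * ‖B (p.1 - p.2.1 + p.2.2)‖ * ‖B p.1‖
      = ‖B (p.1 - p.2.1 + p.2.2)‖ * (‖B p.1‖ * (‖B p.2.1‖ * ‖B p.2.2‖)) := by ring
    _ ≤ (∑' k, ‖B k‖) * (‖B p.1‖ * (‖B p.2.1‖ * ‖B p.2.2‖)) := by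
      gcongr
      exact hB.le_tsum _ fun _ _ => norm_nonneg _

lemma summable_norm_ofReal_mul_interactionTerm {B : ℤ → ℂ} (hB : Summable fun k => ‖B k‖)
    (t : ℝ) {c : ℤ × ℤ × ℤ → ℝ} {C : ℝ} (hc : ∀ p, |c p| ≤ C) :
    Summable fun p => ‖(c p : ℂ) * interactionTerm B t p‖ := by
  refine .of_nonneg_of_le (fun _ => norm_nonneg _) (fun p => ?_)
    ((summable_norm_interactionTerm hB t).mul_left C)
  rw [norm_mul, Complex.norm_real, Real.norm_eq_abs]
  exact mul_le_mul_of_nonneg_right (hc p) (norm_nonneg _)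

lemma abs_altCoeff_le {a : ℤ → ℝ} {C : ℝ} (ha : ∀ k, |a k| ≤ C) (p : ℤ × ℤ × ℤ) :
    |altCoeff a p| ≤ 4 * C := by
  have := abs_le.mp (ha p.1)
  have := abs_le.mp (ha p.2.1)
  have := abs_le.mp (ha p.2.2)
  have := abs_le.mp (ha (p.1 - p.2.1 + p.2.2))
  rw [abs_le, altCoeff]
  constructor <;> linarith

lemma altCoeff_eq_zero_of_resonant (a : ℤ → ℝ) {p : ℤ × ℤ × ℤ}
    (hp : (p.1 - p.2.1) * (p.2.1 - p.2.2) = 0) : altCoeff a p = 0 := by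
  obtain ⟨k, j₁, j₂⟩ := p
  rcases mul_eq_zero.mp hp with h | h
  · obtain rfl : k = j₁ := sub_eq_zero.mp h
    simp [altCoeff]
  · obtain rfl : j₁ = j₂ := sub_eq_zero.mp h
    simp [altCoeff]

def swapKJ₁ (p : ℤ × ℤ × ℤ) : ℤ × ℤ × ℤ := (p.2.1, p.1, p.1 - p.2.1 + p.2.2)

def swapKJ₂ (p : ℤ × ℤ × ℤ) : ℤ × ℤ × ℤ := (p.2.2, p.1 - p.2.1 + p.2.2, p.1)

def swapKJ₃ (p : ℤ × ℤ × ℤ) : ℤ × ℤ × ℤ := (p.1 - p.2.1 + p.2.2, p.2.2, p.2.1)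

lemma swapKJ₁_involutive : Function.Involutive swapKJ₁ :=
  fun ⟨_, _, _⟩ => by simp only [swapKJ₁]; grind

lemma swapKJ₂_involutive : Function.Involutive swapKJ₂ :=
  fun ⟨_, _, _⟩ => by simp only [swapKJ₂]; grind

lemma swapKJ₃_involutive : Function.Involutive swapKJ₃ :=
  fun ⟨_, _, _⟩ => by simp only [swapKJ₃]; grind

lemma interactionTerm_swapKJ₁ (B : ℤ → ℂ) (t : ℝ) (p : ℤ × ℤ × ℤ) :
    interactionTerm B t (swapKJ₁ p) = conj (interactionTerm B t p) := by
  obtain ⟨k, j₁, j₂⟩ := p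
  simp only [swapKJ₁, interactionTerm, map_mul, Complex.conj_conj, ← Complex.exp_conj, map_neg,
    Complex.conj_I, Complex.conj_ofReal, map_intCast]
  push_cast
  ring_nf

lemma interactionTerm_swapKJ₂ (B : ℤ → ℂ) (t : ℝ) (p : ℤ × ℤ × ℤ) :
    interactionTerm B t (swapKJ₂ p) = interactionTerm B t p := by
  obtain ⟨k, j₁, j₂⟩ := p
  simp only [swapKJ₂, interactionTerm]
  push_cast
  ring_nf

lemma interactionTerm_swapKJ₃ (B : ℤ → ℂ) (t : ℝ) (p : ℤ × ℤ × ℤ) :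
    interactionTerm B t (swapKJ₃ p) = conj (interactionTerm B t p) := by
  obtain ⟨k, j₁, j₂⟩ := p
  simp only [swapKJ₃, interactionTerm, map_mul, Complex.conj_conj, ← Complex.exp_conj, map_neg,
    Complex.conj_I, Complex.conj_ofReal, map_intCast]
  push_cast
  ring_nf

lemma tsum_eq_conj_tsum_of_involutive {α : Type*} {σ : α → α} (hσ : Function.Involutive σ)
    {f g : α → ℂ} (h : ∀ p, g p = conj (f (σ p))) : ∑' p, g p = conj (∑' p, f p) := by
  rw [Complex.conj_tsum, ← (hσ.toPerm σ).tsum_eq fun p => conj (f p)]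
  exact tsum_congr h

lemma tsum_ofReal_j₁_mul_interactionTerm (B : ℤ → ℂ) (a : ℤ → ℝ) (t : ℝ) :
    ∑' p : ℤ × ℤ × ℤ, (a p.2.1 : ℂ) * interactionTerm B t p
      = conj (∑' p : ℤ × ℤ × ℤ, (a p.1 : ℂ) * interactionTerm B t p) :=
  tsum_eq_conj_tsum_of_involutive swapKJ₁_involutive fun p => by
    rw [map_mul, interactionTerm_swapKJ₁, Complex.conj_conj, Complex.conj_ofReal]
    rfl

lemma tsum_ofReal_j₂_mul_interactionTerm (B : ℤ → ℂ) (a : ℤ → ℝ) (t : ℝ) :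
    ∑' p : ℤ × ℤ × ℤ, (a p.2.2 : ℂ) * interactionTerm B t p
      = ∑' p : ℤ × ℤ × ℤ, (a p.1 : ℂ) * interactionTerm B t p := by
  refine .trans (tsum_congr fun p => ?_) ((swapKJ₂_involutive.toPerm swapKJ₂).tsum_eq _)
  rw [Function.Involutive.coe_toPerm, interactionTerm_swapKJ₂]
  rfl

lemma tsum_ofReal_j₃_mul_interactionTerm (B : ℤ → ℂ) (a : ℤ → ℝ) (t : ℝ) :
    ∑' p : ℤ × ℤ × ℤ, (a (p.1 - p.2.1 + p.2.2) : ℂ) * interactionTerm B t p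
      = conj (∑' p : ℤ × ℤ × ℤ, (a p.1 : ℂ) * interactionTerm B t p) :=
  tsum_eq_conj_tsum_of_involutive swapKJ₃_involutive fun p => by
    rw [map_mul, interactionTerm_swapKJ₃, Complex.conj_conj, Complex.conj_ofReal]
    rfl

lemma tsum_altCoeff_mul_interactionTerm {B : ℤ → ℂ} (hB : Summable fun k => ‖B k‖)
    {a : ℤ → ℝ} {C : ℝ} (ha : ∀ k, |a k| ≤ C) (t : ℝ) :
    ∑' p, (altCoeff a p : ℂ) * interactionTerm B t p
      = 2 * ((∑' p : ℤ × ℤ × ℤ, (a p.1 : ℂ) * interactionTerm B t p)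
          - conj (∑' p : ℤ × ℤ × ℤ, (a p.1 : ℂ) * interactionTerm B t p)) := by
  have summable (i : ℤ × ℤ × ℤ → ℤ) :
      Summable fun p => (a (i p) : ℂ) * interactionTerm B t p :=
    (summable_norm_ofReal_mul_interactionTerm hB t fun p => ha (i p)).of_norm
  have split (p : ℤ × ℤ × ℤ) : (altCoeff a p : ℂ) * interactionTerm B t p
      = (a p.1 : ℂ) * interactionTerm B t p - (a p.2.1 : ℂ) * interactionTerm B t p
        + (a p.2.2 : ℂ) * interactionTerm B t p
        - (a (p.1 - p.2.1 + p.2.2) : ℂ) * interactionTerm B t p := by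
    simp only [altCoeff]; push_cast; ring
  rw [tsum_congr split, Summable.tsum_sub (((summable _).sub (summable _)).add (summable _))
    (summable _), Summable.tsum_add ((summable _).sub (summable _)) (summable _),
    Summable.tsum_sub (summable _) (summable _), tsum_ofReal_j₁_mul_interactionTerm,
    tsum_ofReal_j₂_mul_interactionTerm, tsum_ofReal_j₃_mul_interactionTerm]
  ring

/-- symmetrization identity: for `B` absolutely summable, `a` bounded and
`t ∈ ℝ`, the family `(a(k) - a(j₁) + a(j₂) - a(j₃)) T(k,j₁,j₂)` is absolutely summable,
the family `a(k) T(k,j₁,j₂)` is absolutely summable with sum `S`, the first sum equals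
`2 (S - conj S)`, every term with `ω = (k-j₁)(j₁-j₂) = 0` vanishes, and the first sum
equals the same sum restricted to triples with `ω ≠ 0`. -/
theorem stmt6 (B : ℤ → ℂ) (hB : Summable fun k : ℤ => ‖B k‖)
    (a : ℤ → ℝ) (C : ℝ) (ha : ∀ k : ℤ, |a k| ≤ C) (t : ℝ) :
    (Summable fun p : ℤ × ℤ × ℤ => ‖((altCoeff a p : ℝ) : ℂ) * interactionTerm B t p‖)
    ∧ (Summable fun p : ℤ × ℤ × ℤ => ‖((a p.1 : ℝ) : ℂ) * interactionTerm B t p‖)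
    ∧ (∑' p : ℤ × ℤ × ℤ, ((altCoeff a p : ℝ) : ℂ) * interactionTerm B t p
        = 2 * ((∑' p : ℤ × ℤ × ℤ, ((a p.1 : ℝ) : ℂ) * interactionTerm B t p)
            - (starRingEnd ℂ) (∑' p : ℤ × ℤ × ℤ, ((a p.1 : ℝ) : ℂ) * interactionTerm B t p)))
    ∧ (∀ p : ℤ × ℤ × ℤ, (p.1 - p.2.1) * (p.2.1 - p.2.2) = 0 →
        ((altCoeff a p : ℝ) : ℂ) * interactionTerm B t p = 0)
    ∧ (∑' p : ℤ × ℤ × ℤ, ((altCoeff a p : ℝ) : ℂ) * interactionTerm B t p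
        = ∑' q : {p : ℤ × ℤ × ℤ // (p.1 - p.2.1) * (p.2.1 - p.2.2) ≠ 0},
            ((altCoeff a q.1 : ℝ) : ℂ) * interactionTerm B t q.1) := by
  have vanish (p : ℤ × ℤ × ℤ) (hp : (p.1 - p.2.1) * (p.2.1 - p.2.2) = 0) :
      ((altCoeff a p : ℝ) : ℂ) * interactionTerm B t p = 0 := by
    rw [altCoeff_eq_zero_of_resonant a hp, Complex.ofReal_zero, zero_mul]
  refine ⟨summable_norm_ofReal_mul_interactionTerm hB t (abs_altCoeff_le ha),
    summable_norm_ofReal_mul_interactionTerm hB t fun p => ha p.1,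
    tsum_altCoeff_mul_interactionTerm hB ha t, vanish, ?_⟩
  exact (tsum_subtype_eq_of_support_subset fun p hp => mt (vanish p) hp).symm
end

section
/- Conservation of mass for the Fourier-mode system: let T > 1, let h : ℤ → [0,∞) satisfy Σ_{k∈ℤ} h_k < ∞, and let B_k : [1,T] → ℂ (k ∈ ℤ) be differentiable functions such that |B_k(t)| ≤ h_k for all k ∈ ℤ and t ∈ [1,T], and such that for every k ∈ ℤ and t ∈ [1,T] one has i · B_k'(t) = (1/t) · Σ_{(j₁,j₂)∈ℤ²} e^{−i t (k−j₁)(j₁−j₂)} · B_{j₁}(t) · conj(B_{j₂}(t)) · B_{k−j₁+j₂}(t), the sum converging absolutely. Then Σ_{k∈ℤ} |B_k(t)|² = Σ_{k∈ℤ} |B_k(1)|² for every t ∈ [1,T]. -/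
/-!
Since `‖B_k‖ ≤ h_k` with `h` summable, the mass `Σ_k ‖B_k‖²` may be differentiated termwise
in the interior of `[1, T]`, and the equation turns its derivative `2 Σ_k ⟪B_k, B_k'⟫` into
`(2 / t) · Im Σ_{k, j₁, j₂} conj(B_k) e^{-i t (k-j₁)(j₁-j₂)} B_{j₁} conj(B_{j₂}) B_{j₃}`.
The involution `(k, j₁, j₂) ↦ (j₁, k, j₃)` of `ℤ³` reverses the sign of the phase
`(k - j₁)(j₁ - j₂)` and maps each summand of the triple sum to its complex conjugate, so the
triple sum is real and the mass has zero derivative.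
-/

open Set Complex ComplexConjugate
open scoped InnerProductSpace

noncomputable def cubicSummand (b : ℤ → ℂ) (t : ℝ) (k : ℤ) (j : ℤ × ℤ) : ℂ :=
  exp (-I * (t : ℂ) * (((k - j.1) * (j.1 - j.2) : ℤ) : ℂ)) * b j.1 * conj (b j.2)
    * b (k - j.1 + j.2)

noncomputable def cubicPairing (b : ℤ → ℂ) (t : ℝ) (p : ℤ × ℤ × ℤ) : ℂ :=
  conj (b p.1) * cubicSummand b t p.1 p.2

def resonanceSwap (p : ℤ × ℤ × ℤ) : ℤ × ℤ × ℤ := (p.2.1, p.1, p.1 - p.2.1 + p.2.2)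

lemma resonanceSwap_involutive : Function.Involutive resonanceSwap := by
  rintro ⟨k, j₁, j₂⟩
  simp only [resonanceSwap, Prod.mk.injEq, true_and]
  ring

section FixedTime

variable (b : ℤ → ℂ) (t : ℝ)

lemma norm_cubicSummand (k : ℤ) (j : ℤ × ℤ) :
    ‖cubicSummand b t k j‖ = ‖b j.1‖ * ‖b j.2‖ * ‖b (k - j.1 + j.2)‖ := by
  simp [cubicSummand, norm_exp]

lemma conj_cubicPairing (p : ℤ × ℤ × ℤ) :
    conj (cubicPairing b t p) = cubicPairing b t (resonanceSwap p) := by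
  obtain ⟨k, j₁, j₂⟩ := p
  simp only [cubicPairing, cubicSummand, resonanceSwap]
  rw [show j₁ - k + (k - j₁ + j₂) = j₂ by ring,
    show (j₁ - k) * (k - (k - j₁ + j₂)) = -((k - j₁) * (j₁ - j₂)) by ring]
  simp only [map_mul, ← exp_conj, map_neg, conj_I, map_intCast, conj_ofReal, conj_conj,
    Int.cast_neg, mul_neg, neg_mul, neg_neg]
  ring

lemma im_tsum_cubicPairing : (∑' p, cubicPairing b t p).im = 0 := by
  rw [← conj_eq_iff_im]
  calc conj (∑' p, cubicPairing b t p) = ∑' p, cubicPairing b t (resonanceSwap p) := by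
        simp only [← conj_cubicPairing]; exact tsum_star
    _ = ∑' p, cubicPairing b t p := (resonanceSwap_involutive.toPerm _).tsum_eq _

variable {b}

lemma norm_cubicSummand_le (hb : Summable fun k => ‖b k‖) (k : ℤ) (j : ℤ × ℤ) :
    ‖cubicSummand b t k j‖ ≤ ‖b j.1‖ * ‖b j.2‖ * ∑' m, ‖b m‖ := by
  rw [norm_cubicSummand]
  gcongr
  exact hb.le_tsum _ fun _ _ => norm_nonneg _

lemma norm_tsum_cubicSummand_le (hb : Summable fun k => ‖b k‖) (k : ℤ) :
    ‖∑' j, cubicSummand b t k j‖ ≤ (∑' m, ‖b m‖) ^ 3 := by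
  have hprod : HasSum (fun j : ℤ × ℤ => ‖b j.1‖ * ‖b j.2‖ * ∑' m, ‖b m‖)
      ((∑' m, ‖b m‖) ^ 3) := by
    have hb₂ := hb.mul_of_nonneg hb (fun _ => norm_nonneg _) fun _ => norm_nonneg _
    simpa [pow_succ] using (hb.hasSum.mul hb.hasSum hb₂).mul_right (∑' m, ‖b m‖)
  exact tsum_of_norm_bounded hprod (norm_cubicSummand_le t hb k)

lemma summable_cubicPairing (hb : Summable fun k => ‖b k‖) : Summable (cubicPairing b t) := by
  have hb₂ := hb.mul_of_nonneg hb (fun _ => norm_nonneg _) fun _ => norm_nonneg _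
  have hb₃ := hb.mul_of_nonneg hb₂ (fun _ => norm_nonneg _) fun _ => by positivity
  refine .of_norm_bounded (hb₃.mul_right (∑' m, ‖b m‖)) fun p => ?_
  rw [cubicPairing, norm_mul, RCLike.norm_conj, mul_assoc ‖b p.1‖]
  gcongr
  exact norm_cubicSummand_le t hb p.1 p.2

lemma norm_le_of_I_mul_eq (ht : 1 ≤ t) (hb : Summable fun k => ‖b k‖) {k : ℤ} {d : ℂ}
    (hd : I * d = 1 / t * ∑' j, cubicSummand b t k j) : ‖d‖ ≤ (∑' m, ‖b m‖) ^ 3 := by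
  have hd' : ‖d‖ = ‖∑' j, cubicSummand b t k j‖ / t := by
    rw [← one_mul ‖d‖, ← norm_I, ← norm_mul, hd, norm_mul, norm_div, norm_one, norm_real,
      Real.norm_of_nonneg (by linarith)]
    ring
  rw [hd', div_le_iff₀ (by linarith)]
  calc ‖∑' j, cubicSummand b t k j‖
        ≤ (∑' m, ‖b m‖) ^ 3 := norm_tsum_cubicSummand_le t hb k
    _ ≤ (∑' m, ‖b m‖) ^ 3 * t := le_mul_of_one_le_right (by positivity) ht

lemma tsum_inner_eq_zero (hb : Summable fun k => ‖b k‖) {d : ℤ → ℂ}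
    (hd : ∀ k, I * d k = 1 / t * ∑' j, cubicSummand b t k j) :
    ∑' k, ⟪b k, d k⟫_ℝ = 0 := by
  have hpair : ∀ k, ⟪b k, d k⟫_ℝ = t⁻¹ * (∑' j, cubicPairing b t (k, j)).im := by
    intro k
    have hdk : d k = -I * ((t⁻¹ : ℝ) * ∑' j, cubicSummand b t k j) := by
      push_cast
      rw [← one_div, ← hd k, ← mul_assoc, neg_mul, I_mul_I, neg_neg, one_mul]
    rw [Complex.inner, hdk, show -I * ((t⁻¹ : ℝ) * ∑' j, cubicSummand b t k j) * conj (b k)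
        = -(I * ((t⁻¹ : ℝ) * ∑' j, cubicPairing b t (k, j))) by
          simp only [cubicPairing, tsum_mul_left]; ring,
      neg_re, I_mul_re, neg_neg, im_ofReal_mul]
  have hsum := summable_cubicPairing t hb
  rw [tsum_congr hpair, tsum_mul_left, ← im_tsum hsum.prod, ← hsum.tsum_prod,
    im_tsum_cubicPairing, mul_zero]

end FixedTime

lemma eq_of_continuousOn_of_hasDerivAt_zero {f : ℝ → ℝ} {a b : ℝ} (hab : a ≤ b)
    (hf : ContinuousOn f (Icc a b)) (hf' : ∀ x ∈ Ioo a b, HasDerivAt f 0 x) : f b = f a := by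
  rcases hab.eq_or_lt with rfl | hlt
  · rfl
  obtain ⟨c, -, hc⟩ := exists_hasDerivAt_eq_slope f (fun _ => 0) hlt hf hf'
  rw [eq_comm, div_eq_zero_iff, sub_eq_zero] at hc
  exact hc.resolve_right (sub_ne_zero.2 hlt.ne')

section ModeSystem

variable {T : ℝ} {h : ℤ → ℝ} {B D : ℤ → ℝ → ℂ}

lemma norm_sq_le_mul_tsum (hpos : ∀ k, 0 ≤ h k) (hsum : Summable h) {k : ℤ} {z : ℂ}
    (hz : ‖z‖ ≤ h k) : ‖z‖ ^ 2 ≤ h k * ∑' m, h m := by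
  rw [sq]
  exact mul_le_mul hz (hz.trans (hsum.le_tsum k fun m _ => hpos m)) (norm_nonneg _) (hpos k)

lemma continuousOn_tsum_norm_sq (hpos : ∀ k, 0 ≤ h k) (hsum : Summable h)
    (hbd : ∀ k, ∀ t ∈ Icc 1 T, ‖B k t‖ ≤ h k)
    (hderiv : ∀ k, ∀ t ∈ Icc 1 T, HasDerivWithinAt (B k) (D k t) (Icc 1 T) t) :
    ContinuousOn (fun t => ∑' k, ‖B k t‖ ^ 2) (Icc 1 T) := by
  refine continuousOn_tsum (fun k => ?_) (hsum.mul_right (∑' m, h m)) fun k t ht => ?_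
  · have hB : ContinuousOn (B k) (Icc 1 T) := fun t ht => (hderiv k t ht).continuousWithinAt
    exact hB.norm.pow 2
  · rw [norm_pow, norm_norm]
    exact norm_sq_le_mul_tsum hpos hsum (hbd k t ht)

lemma hasDerivAt_tsum_norm_sq (hpos : ∀ k, 0 ≤ h k) (hsum : Summable h)
    (hbd : ∀ k, ∀ t ∈ Icc 1 T, ‖B k t‖ ≤ h k)
    (hderiv : ∀ k, ∀ t ∈ Icc 1 T, HasDerivWithinAt (B k) (D k t) (Icc 1 T) t)
    (heq : ∀ k, ∀ t ∈ Icc 1 T, I * D k t = 1 / t * ∑' j, cubicSummand (B · t) t k j)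
    {x : ℝ} (hx : x ∈ Ioo 1 T) :
    HasDerivAt (fun t => ∑' k, ‖B k t‖ ^ 2) 0 x := by
  have hb : ∀ t ∈ Icc 1 T, Summable fun k => ‖B k t‖ := fun t ht =>
    .of_nonneg_of_le (fun _ => norm_nonneg _) (hbd · t ht) hsum
  have hD : ∀ t ∈ Icc 1 T, ∀ k, ‖D k t‖ ≤ (∑' m, h m) ^ 3 := fun t ht k =>
    (norm_le_of_I_mul_eq t ht.1 (hb t ht) (heq k t ht)).trans <|
      pow_le_pow_left₀ (tsum_nonneg fun _ => norm_nonneg _)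
        ((hb t ht).tsum_le_tsum (hbd · t ht) hsum) 3
  have hderiv' := hasDerivAt_tsum_of_isPreconnected
    (g := fun k t => ‖B k t‖ ^ 2) (g' := fun k t => 2 * ⟪B k t, D k t⟫_ℝ)
    ((hsum.mul_right ((∑' m, h m) ^ 3)).mul_left 2) isOpen_Ioo isPreconnected_Ioo
    (fun k t ht => ((hderiv k t (Ioo_subset_Icc_self ht)).hasDerivAt
      (Icc_mem_nhds ht.1 ht.2)).norm_sq)
    (fun k t ht => ?_) hx
    (.of_nonneg_of_le (fun _ => by positivity)
      (fun k => norm_sq_le_mul_tsum hpos hsum (hbd k x (Ioo_subset_Icc_self hx)))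
      (hsum.mul_right (∑' m, h m))) hx
  · rwa [tsum_mul_left, tsum_inner_eq_zero x (hb x (Ioo_subset_Icc_self hx))
      (heq · x (Ioo_subset_Icc_self hx)), mul_zero] at hderiv'
  · have ht' := Ioo_subset_Icc_self ht
    rw [norm_mul, Real.norm_two, Real.norm_eq_abs]
    gcongr
    exact (abs_real_inner_le_norm _ _).trans
      (mul_le_mul (hbd k t ht') (hD t ht' k) (norm_nonneg _) (hpos k))

end ModeSystem

theorem stmt7_general (T : ℝ) (h : ℤ → ℝ)
    (hsum : Summable h) (B D : ℤ → ℝ → ℂ)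
    (hbd : ∀ k : ℤ, ∀ t ∈ Set.Icc (1 : ℝ) T, ‖B k t‖ ≤ h k)
    (hderiv : ∀ k : ℤ, ∀ t ∈ Set.Icc (1 : ℝ) T,
      HasDerivWithinAt (B k) (D k t) (Set.Icc (1 : ℝ) T) t)
    (heq : ∀ k : ℤ, ∀ t ∈ Set.Icc (1 : ℝ) T,
      Complex.I * D k t
        = (1 / (t : ℂ)) * ∑' j : ℤ × ℤ,
            Complex.exp (-Complex.I * (t : ℂ) * (((k - j.1) * (j.1 - j.2) : ℤ) : ℂ))
              * B j.1 t * (starRingEnd ℂ) (B j.2 t) * B (k - j.1 + j.2) t) :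
    ∀ t ∈ Set.Icc (1 : ℝ) T,
      ∑' k : ℤ, ‖B k t‖^2 = ∑' k : ℤ, ‖B k 1‖^2 := by
  intro t ht
  have hpos : ∀ k, 0 ≤ h k := fun k => (norm_nonneg _).trans (hbd k t ht)
  exact eq_of_continuousOn_of_hasDerivAt_zero ht.1
    ((continuousOn_tsum_norm_sq hpos hsum hbd hderiv).mono (Icc_subset_Icc_right ht.2))
    fun x hx => hasDerivAt_tsum_norm_sq hpos hsum hbd hderiv heq ⟨hx.1, hx.2.trans_le ht.2⟩

/-- conservation of mass for the Fourier-mode system: if `B_k : [1,T] → ℂ`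
are differentiable, uniformly dominated by a summable family `h`, and satisfy
`i B_k'(t) = (1/t) Σ_{(j₁,j₂)} e^{-i t (k-j₁)(j₁-j₂)} B_{j₁}(t) conj(B_{j₂}(t)) B_{k-j₁+j₂}(t)`
with absolutely convergent sums, then `Σ_k |B_k(t)|²` is constant on `[1,T]`. -/
theorem stmt7 (T : ℝ) (hT : 1 < T) (h : ℤ → ℝ) (hpos : ∀ k : ℤ, 0 ≤ h k)
    (hsum : Summable h) (B D : ℤ → ℝ → ℂ)
    (hbd : ∀ k : ℤ, ∀ t ∈ Set.Icc (1 : ℝ) T, ‖B k t‖ ≤ h k)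
    (hderiv : ∀ k : ℤ, ∀ t ∈ Set.Icc (1 : ℝ) T,
      HasDerivWithinAt (B k) (D k t) (Set.Icc (1 : ℝ) T) t)
    (habs : ∀ k : ℤ, ∀ t ∈ Set.Icc (1 : ℝ) T,
      Summable fun j : ℤ × ℤ =>
        ‖Complex.exp (-Complex.I * (t : ℂ) * (((k - j.1) * (j.1 - j.2) : ℤ) : ℂ))
          * B j.1 t * (starRingEnd ℂ) (B j.2 t) * B (k - j.1 + j.2) t‖)
    (heq : ∀ k : ℤ, ∀ t ∈ Set.Icc (1 : ℝ) T,
      Complex.I * D k t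
        = (1 / (t : ℂ)) * ∑' j : ℤ × ℤ,
            Complex.exp (-Complex.I * (t : ℂ) * (((k - j.1) * (j.1 - j.2) : ℤ) : ℂ))
              * B j.1 t * (starRingEnd ℂ) (B j.2 t) * B (k - j.1 + j.2) t) :
    ∀ t ∈ Set.Icc (1 : ℝ) T,
      ∑' k : ℤ, ‖B k t‖^2 = ∑' k : ℤ, ‖B k 1‖^2 :=
  stmt7_general T h hsum B D hbd hderiv heq
end

section
/- For every r with 0 < r < 1/2 there exists a constant C > 0 such that for all integers k, j₁, j₂, j₃ satisfying k − j₁ + j₂ − j₃ = 0 and k² − j₁² + j₂² − j₃² ≠ 0, one has |⟨k⟩^{2r} − ⟨j₁⟩^{2r} + ⟨j₂⟩^{2r} − ⟨j₃⟩^{2r}| / |k² − j₁² + j₂² − j₃²| ≤ C / max{⟨k⟩, ⟨j₁⟩, ⟨j₂⟩, ⟨j₃⟩}. -/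
/-- The Japanese bracket `⟨x⟩ = √(1 + x²)`. -/
noncomputable def jbr (x : ℝ) : ℝ := Real.sqrt (1 + x^2)

/-! Write `F x = (1 + x²)^r = ⟨x⟩^{2r}`, `a = k - j₁`, `b = j₁ - j₂`. The quadruple is then
`(k, k - a, k - a - b, k - b)`, the denominator is `2ab` and the numerator is a second difference
of `F`. Since `2r ≤ 1`, `|F'| ≤ 1` and `|F''(x)| ≤ 1/⟨x⟩`. If `|a|` or `|b|` is at least `|k|/4`,
pairing the four terms and using the Lipschitz bound gives a numerator at most `2 min(|a|, |b|)`;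
otherwise all four points lie between `k/2` and `3k/2` and the second difference is at most
`(2/|k|)|a||b|`. Either way `|numerator| · |k| ≤ 4 |denominator|`. The quadruple's symmetries let
`k` be the entry of largest modulus, and `⟨k⟩ ≤ 2|k|` for a nonzero integer `k`. -/

open Set

def quadDiff (f : ℝ → ℝ) (k j₁ j₂ j₃ : ℝ) : ℝ := f k - f j₁ + f j₂ - f j₃

lemma abs_quadDiff_le_of_lipschitzWith {f : ℝ → ℝ} {L : NNReal} (hf : LipschitzWith L f)
    (x a b : ℝ) : |quadDiff f x (x - a) (x - a - b) (x - b)| ≤ 2 * L * |b| := by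
  have h₁ : |f x - f (x - b)| ≤ L * |b| := by
    simpa [Real.dist_eq] using hf.dist_le_mul x (x - b)
  have h₂ : |f (x - a - b) - f (x - a)| ≤ L * |b| := by
    simpa [Real.dist_eq, abs_sub_comm] using hf.dist_le_mul (x - a - b) (x - a)
  calc |quadDiff f x (x - a) (x - a - b) (x - b)|
      = |(f x - f (x - b)) + (f (x - a - b) - f (x - a))| := by rw [quadDiff]; ring_nf
    _ ≤ |f x - f (x - b)| + |f (x - a - b) - f (x - a)| := abs_add_le _ _
    _ ≤ 2 * L * |b| := by linarith

lemma abs_quadDiff_le_of_hasDerivAt {f f' f'' : ℝ → ℝ} {s : Set ℝ} {M : ℝ} (hs : s.OrdConnected)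
    (hf : ∀ t ∈ s, HasDerivAt f (f' t) t) (hf' : ∀ t ∈ s, HasDerivAt f' (f'' t) t)
    (hf'' : ∀ t ∈ s, |f'' t| ≤ M) {x a b : ℝ} (hx : x ∈ s) (hxa : x - a ∈ s)
    (hxab : x - a - b ∈ s) (hxb : x - b ∈ s) :
    |quadDiff f x (x - a) (x - a - b) (x - b)| ≤ M * |a| * |b| := by
  have hshift : ∀ t ∈ uIcc (x - a) x, t ∈ s ∧ t - b ∈ s := by
    intro t ht
    refine ⟨hs.uIcc_subset hxa hx ht, hs.uIcc_subset hxab hxb ?_⟩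
    rw [mem_uIcc] at ht ⊢
    rcases ht with ht | ht
    · exact Or.inl ⟨by linarith, by linarith⟩
    · exact Or.inr ⟨by linarith, by linarith⟩
  have hg : ∀ t ∈ uIcc (x - a) x, HasDerivWithinAt (fun z => f z - f (z - b))
      (f' t - f' (t - b)) (uIcc (x - a) x) t := by
    intro t ht
    have h := (hf (t - b) (hshift t ht).2).comp_sub_const t b
    exact ((hf t (hshift t ht).1).sub h).hasDerivWithinAt
  have hg' : ∀ t ∈ uIcc (x - a) x, ‖f' t - f' (t - b)‖ ≤ M * |b| := by
    intro t ht
    have h := hs.convex.norm_image_sub_le_of_norm_hasDerivWithin_le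
      (fun z hz => (hf' z hz).hasDerivWithinAt) hf'' (hshift t ht).2 (hshift t ht).1
    simpa using h
  have h := (convex_uIcc (x - a) x).norm_image_sub_le_of_norm_hasDerivWithin_le hg hg'
    left_mem_uIcc right_mem_uIcc
  calc |quadDiff f x (x - a) (x - a - b) (x - b)|
      = ‖(f x - f (x - b)) - (f (x - a) - f (x - a - b))‖ := by
        rw [Real.norm_eq_abs, quadDiff]; ring_nf
    _ ≤ M * |b| * ‖x - (x - a)‖ := h
    _ = M * |a| * |b| := by rw [sub_sub_cancel, Real.norm_eq_abs]; ring

lemma abs_quadDiff_swap (f : ℝ → ℝ) (k j₁ j₂ j₃ : ℝ) :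
    |quadDiff f j₁ k j₃ j₂| = |quadDiff f k j₁ j₂ j₃| := by
  rw [← abs_neg]; simp only [quadDiff]; ring_nf

lemma quadDiff_comm (f : ℝ → ℝ) (k j₁ j₂ j₃ : ℝ) :
    quadDiff f j₂ j₁ k j₃ = quadDiff f k j₁ j₂ j₃ := by
  simp only [quadDiff]; ring

lemma abs_quadDiff_mul_max_le {f g : ℝ → ℝ} {C : ℝ}
    (h : ∀ k j₁ j₂ j₃, k - j₁ + j₂ - j₃ = 0 →
      |quadDiff f k j₁ j₂ j₃| * |k| ≤ C * |quadDiff g k j₁ j₂ j₃|)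
    {k j₁ j₂ j₃ : ℝ} (hsum : k - j₁ + j₂ - j₃ = 0) :
    |quadDiff f k j₁ j₂ j₃| * max (max |k| |j₁|) (max |j₂| |j₃|)
      ≤ C * |quadDiff g k j₁ j₂ j₃| := by
  obtain hm | hm := max_choice (max |k| |j₁|) (max |j₂| |j₃|) <;> rw [hm]
  · obtain hm | hm := max_choice |k| |j₁| <;> rw [hm]
    · exact h k j₁ j₂ j₃ hsum
    · simpa only [abs_quadDiff_swap] using h j₁ k j₃ j₂ (by linarith)
  · obtain hm | hm := max_choice |j₂| |j₃| <;> rw [hm]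
    · simpa only [quadDiff_comm] using h j₂ j₁ k j₃ (by linarith)
    · simpa only [quadDiff_comm, abs_quadDiff_swap] using h j₃ k j₁ j₂ (by linarith)

noncomputable def bracketRpow (r x : ℝ) : ℝ := (1 + x ^ 2) ^ r

lemma jbr_rpow_two_mul (r x : ℝ) : jbr x ^ (2 * r) = bracketRpow r x := by
  rw [jbr, bracketRpow, Real.sqrt_eq_rpow, ← Real.rpow_mul (by positivity)]
  ring_nf

lemma bracketRpow_neg (r x : ℝ) : bracketRpow r (-x) = bracketRpow r x := by
  simp [bracketRpow]

lemma jbr_pos (x : ℝ) : 0 < jbr x := Real.sqrt_pos.mpr (by positivity)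

lemma abs_le_jbr (x : ℝ) : |x| ≤ jbr x := by
  rw [jbr, ← Real.sqrt_sq_eq_abs]
  exact Real.sqrt_le_sqrt (by linarith)

lemma jbr_le_two_mul {x M : ℝ} (hx : |x| ≤ M) (hM : 1 ≤ M) : jbr x ≤ 2 * M := by
  rw [jbr, Real.sqrt_le_left (by linarith), ← sq_abs]
  nlinarith [abs_nonneg x]

lemma hasDerivAt_bracketRpow (r x : ℝ) :
    HasDerivAt (bracketRpow r) (2 * r * x * (1 + x ^ 2) ^ (r - 1)) x := by
  have h := ((hasDerivAt_pow 2 x).const_add 1).rpow_const (p := r) (Or.inl (by positivity))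
  exact h.congr_deriv (by push_cast; ring)

lemma hasDerivAt_deriv_bracketRpow (r x : ℝ) :
    HasDerivAt (fun x => 2 * r * x * (1 + x ^ 2) ^ (r - 1))
      (2 * r * (1 + x ^ 2) ^ (r - 1) * ((1 + (2 * r - 1) * x ^ 2) / (1 + x ^ 2))) x := by
  have h := ((hasDerivAt_pow 2 x).const_add 1).rpow_const (p := r - 1) (Or.inl (by positivity))
  have h' := ((hasDerivAt_id x).const_mul (2 * r)).mul h
  refine h'.congr_deriv ?_
  rw [Real.rpow_sub_one (by positivity) (r - 1)]
  field_simp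
  simp only [id]
  push_cast
  ring

lemma rpow_sub_one_le_inv_jbr {r : ℝ} (hr : r ≤ 1 / 2) (x : ℝ) :
    (1 + x ^ 2) ^ (r - 1) ≤ (jbr x)⁻¹ := by
  rw [jbr, Real.sqrt_eq_rpow, ← Real.rpow_neg (by positivity)]
  exact Real.rpow_le_rpow_of_exponent_le (by nlinarith) (by linarith)

lemma abs_deriv_bracketRpow_le {r : ℝ} (hr0 : 0 ≤ r) (hr : r ≤ 1 / 2) (x : ℝ) :
    |2 * r * x * (1 + x ^ 2) ^ (r - 1)| ≤ 1 := by
  have hj := jbr_pos x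
  have h := rpow_sub_one_le_inv_jbr hr x
  rw [abs_mul, abs_mul, abs_of_nonneg (by positivity : 0 ≤ 2 * r),
    abs_of_nonneg (by positivity : 0 ≤ (1 + x ^ 2) ^ (r - 1))]
  calc 2 * r * |x| * (1 + x ^ 2) ^ (r - 1) ≤ 1 * jbr x * (1 + x ^ 2) ^ (r - 1) := by
        gcongr
        · linarith
        · exact abs_le_jbr x
    _ ≤ 1 * jbr x * (jbr x)⁻¹ := by gcongr
    _ = 1 := by field_simp

lemma abs_deriv2_bracketRpow_le {r : ℝ} (hr0 : 0 ≤ r) (hr : r ≤ 1 / 2) (x : ℝ) :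
    |2 * r * (1 + x ^ 2) ^ (r - 1) * ((1 + (2 * r - 1) * x ^ 2) / (1 + x ^ 2))| ≤ (jbr x)⁻¹ := by
  have hfrac : |(1 + (2 * r - 1) * x ^ 2) / (1 + x ^ 2)| ≤ 1 := by
    rw [abs_div, abs_of_pos (by positivity : (0 : ℝ) < 1 + x ^ 2), div_le_one (by positivity),
      abs_le]
    constructor <;> nlinarith [sq_nonneg x]
  rw [abs_mul, abs_mul, abs_of_nonneg (by positivity : 0 ≤ 2 * r),
    abs_of_nonneg (by positivity : 0 ≤ (1 + x ^ 2) ^ (r - 1))]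
  calc 2 * r * (1 + x ^ 2) ^ (r - 1) * |(1 + (2 * r - 1) * x ^ 2) / (1 + x ^ 2)|
      ≤ 1 * (1 + x ^ 2) ^ (r - 1) * 1 := by gcongr; linarith
    _ ≤ (jbr x)⁻¹ := by rw [one_mul, mul_one]; exact rpow_sub_one_le_inv_jbr hr x

lemma lipschitzWith_bracketRpow {r : ℝ} (hr0 : 0 ≤ r) (hr : r ≤ 1 / 2) :
    LipschitzWith 1 (bracketRpow r) :=
  lipschitzOnWith_univ.1 <| convex_univ.lipschitzOnWith_of_nnnorm_hasDerivWithin_le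
    (fun x _ => (hasDerivAt_bracketRpow r x).hasDerivWithinAt)
    (fun x _ => by
      rw [← NNReal.coe_le_coe, coe_nnnorm, Real.norm_eq_abs, NNReal.coe_one]
      exact abs_deriv_bracketRpow_le hr0 hr x)

lemma abs_quadDiff_bracketRpow_mul_le {r : ℝ} (hr0 : 0 ≤ r) (hr : r ≤ 1 / 2) {x : ℝ}
    (hx : 0 < x) (a b : ℝ) :
    |quadDiff (bracketRpow r) x (x - a) (x - a - b) (x - b)| * x ≤ 8 * |a| * |b| := by
  have hlip := lipschitzWith_bracketRpow hr0 hr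
  rcases le_or_gt (x / 4) |a| with ha | ha
  · calc |quadDiff (bracketRpow r) x (x - a) (x - a - b) (x - b)| * x
        ≤ (2 * 1 * |b|) * (4 * |a|) := by
          gcongr
          · exact_mod_cast abs_quadDiff_le_of_lipschitzWith hlip x a b
          · linarith
      _ = 8 * |a| * |b| := by ring
  rcases le_or_gt (x / 4) |b| with hb | hb
  · calc |quadDiff (bracketRpow r) x (x - a) (x - a - b) (x - b)| * x
        = |quadDiff (bracketRpow r) x (x - b) (x - b - a) (x - a)| * x := by
          simp only [quadDiff, sub_right_comm x a b]; ring_nf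
      _ ≤ (2 * 1 * |a|) * (4 * |b|) := by
          gcongr
          · exact_mod_cast abs_quadDiff_le_of_lipschitzWith hlip x b a
          · linarith
      _ = 8 * |a| * |b| := by ring
  -- all four points lie in `[x/2, 3x/2]`, where the second derivative is at most `2/x`
  have hf'' : ∀ t ∈ Icc (x / 2) (3 * x / 2),
      |2 * r * (1 + t ^ 2) ^ (r - 1) * ((1 + (2 * r - 1) * t ^ 2) / (1 + t ^ 2))| ≤ 2 / x := by
    intro t ht
    have ht0 : 0 < t := by linarith [ht.1]
    calc _ ≤ (jbr t)⁻¹ := abs_deriv2_bracketRpow_le hr0 hr t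
      _ ≤ t⁻¹ := by gcongr; simpa [abs_of_pos ht0] using abs_le_jbr t
      _ ≤ 2 / x := by rw [inv_le_comm₀ ht0 (by positivity), inv_div]; exact ht.1
  obtain ⟨ha₁, ha₂⟩ := abs_lt.mp ha
  obtain ⟨hb₁, hb₂⟩ := abs_lt.mp hb
  have h := abs_quadDiff_le_of_hasDerivAt ordConnected_Icc
    (fun t _ => hasDerivAt_bracketRpow r t) (fun t _ => hasDerivAt_deriv_bracketRpow r t) hf''
    (x := x) (a := a) (b := b) ⟨by linarith, by linarith⟩ ⟨by linarith, by linarith⟩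
    ⟨by linarith, by linarith⟩ ⟨by linarith, by linarith⟩
  calc |quadDiff (bracketRpow r) x (x - a) (x - a - b) (x - b)| * x
      ≤ 2 / x * |a| * |b| * x := by gcongr
    _ ≤ 8 * |a| * |b| := by field_simp; nlinarith [abs_nonneg a, abs_nonneg b]

lemma abs_quadDiff_bracketRpow_mul_abs_le {r : ℝ} (hr0 : 0 ≤ r) (hr : r ≤ 1 / 2)
    {k j₁ j₂ j₃ : ℝ} (hsum : k - j₁ + j₂ - j₃ = 0) :
    |quadDiff (bracketRpow r) k j₁ j₂ j₃| * |k| ≤ 4 * |quadDiff (· ^ 2) k j₁ j₂ j₃| := by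
  obtain ⟨a, b, rfl, rfl, rfl⟩ : ∃ a b, j₁ = k - a ∧ j₂ = k - a - b ∧ j₃ = k - b :=
    ⟨k - j₁, j₁ - j₂, by ring, by ring, by linarith⟩
  have hsq : quadDiff (· ^ 2) k (k - a) (k - a - b) (k - b) = 2 * a * b := by
    simp only [quadDiff]; ring
  rw [hsq, abs_mul, abs_mul, abs_two]
  rcases lt_trichotomy k 0 with hk | rfl | hk
  · have h := abs_quadDiff_bracketRpow_mul_le hr0 hr (neg_pos.mpr hk) (-a) (-b)
    have heven : quadDiff (bracketRpow r) (-k) (-k - -a) (-k - -a - -b) (-k - -b)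
        = quadDiff (bracketRpow r) k (k - a) (k - a - b) (k - b) := by
      simp only [quadDiff, ← bracketRpow_neg r (k - a), ← bracketRpow_neg r (k - a - b),
        ← bracketRpow_neg r (k - b), bracketRpow_neg r k]
      ring_nf
    rw [heven, abs_neg, abs_neg] at h
    rw [abs_of_neg hk]
    linarith
  · simp only [abs_zero, mul_zero]
    positivity
  · rw [abs_of_pos hk]
    linarith [abs_quadDiff_bracketRpow_mul_le hr0 hr hk a b]

lemma one_le_max_abs_of_sq_ne_zero {k j₁ j₂ j₃ : ℤ} (hD : k^2 - j₁^2 + j₂^2 - j₃^2 ≠ 0) :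
    1 ≤ max (max |(k : ℝ)| |(j₁ : ℝ)|) (max |(j₂ : ℝ)| |(j₃ : ℝ)|) := by
  have one_le_abs_cast : ∀ j : ℤ, j ≠ 0 → (1 : ℝ) ≤ |(j : ℝ)| := fun j hj => by
    rw [← Int.cast_abs]; exact_mod_cast Int.one_le_abs hj
  have hne : k ≠ 0 ∨ j₁ ≠ 0 ∨ j₂ ≠ 0 ∨ j₃ ≠ 0 := by
    contrapose! hD; simp [hD]
  rcases hne with h | h | h | h
  · exact le_max_of_le_left (le_max_of_le_left (one_le_abs_cast k h))
  · exact le_max_of_le_left (le_max_of_le_right (one_le_abs_cast j₁ h))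
  · exact le_max_of_le_right (le_max_of_le_left (one_le_abs_cast j₂ h))
  · exact le_max_of_le_right (le_max_of_le_right (one_le_abs_cast j₃ h))

/-- for `0 < r < 1/2` there is `C > 0` such that for every nonresonant
quadruple (`k - j₁ + j₂ - j₃ = 0`, `k² - j₁² + j₂² - j₃² ≠ 0`),
`|⟨k⟩^{2r} - ⟨j₁⟩^{2r} + ⟨j₂⟩^{2r} - ⟨j₃⟩^{2r}| / |k² - j₁² + j₂² - j₃²|
  ≤ C / max{⟨k⟩, ⟨j₁⟩, ⟨j₂⟩, ⟨j₃⟩}`. -/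
theorem stmt8 (r : ℝ) (hr0 : 0 < r) (hr : r < 1/2) :
    ∃ C : ℝ, 0 < C ∧ ∀ k j₁ j₂ j₃ : ℤ,
      k - j₁ + j₂ - j₃ = 0 → k^2 - j₁^2 + j₂^2 - j₃^2 ≠ 0 →
      |jbr k ^ (2*r) - jbr j₁ ^ (2*r) + jbr j₂ ^ (2*r) - jbr j₃ ^ (2*r)|
          / |(k : ℝ)^2 - (j₁ : ℝ)^2 + (j₂ : ℝ)^2 - (j₃ : ℝ)^2|
        ≤ C / max (max (jbr k) (jbr j₁)) (max (jbr j₂) (jbr j₃)) := by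
  refine ⟨8, by norm_num, fun k j₁ j₂ j₃ hsum hD => ?_⟩
  set M := max (max |(k : ℝ)| |(j₁ : ℝ)|) (max |(j₂ : ℝ)| |(j₃ : ℝ)|)
  have hM : 1 ≤ M := one_le_max_abs_of_sq_ne_zero hD
  have hbound : |quadDiff (bracketRpow r) k j₁ j₂ j₃| * M ≤ 4 * |quadDiff (· ^ 2) k j₁ j₂ j₃| :=
    abs_quadDiff_mul_max_le
      (fun _ _ _ _ => abs_quadDiff_bracketRpow_mul_abs_le hr0.le hr.le) (by exact_mod_cast hsum)
  have hjbr : max (max (jbr k) (jbr j₁)) (max (jbr j₂) (jbr j₃)) ≤ 2 * M := by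
    refine max_le (max_le ?_ ?_) (max_le ?_ ?_) <;> refine jbr_le_two_mul ?_ hM <;> simp [M]
  have hD' : 0 < |quadDiff (· ^ 2) (k : ℝ) j₁ j₂ j₃| := by
    rw [abs_pos, quadDiff]; exact_mod_cast hD
  simp only [jbr_rpow_two_mul]
  calc |quadDiff (bracketRpow r) k j₁ j₂ j₃| / |quadDiff (· ^ 2) (k : ℝ) j₁ j₂ j₃|
      ≤ 8 / (2 * M) := by
        rw [div_le_div_iff₀ hD' (by positivity)]; linarith
    _ ≤ 8 / max (max (jbr k) (jbr j₁)) (max (jbr j₂) (jbr j₃)) :=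
        div_le_div_of_nonneg_left (by norm_num) (lt_max_of_lt_left (lt_max_of_lt_left (jbr_pos _)))
          hjbr
end

section
/- For every r with 0 < r < 1/2 and every ε > 0 there exists a constant C > 0 such that for all families N : ℤ → [0,∞) and P : ℤ → [0,∞), writing j₃ := k − j₁ + j₂ and φ := (⟨k⟩^{2r} − ⟨j₁⟩^{2r} + ⟨j₂⟩^{2r} − ⟨j₃⟩^{2r}) / (k² − j₁² + j₂² − j₃²), one has Σ_{(k,j₁,j₂)∈ℤ³, (k−j₁)(j₁−j₂)≠0} |φ| · N_{j₁} · N_{j₂} · N_{j₃} · P_k ≤ C · (Σ_{j∈ℤ} N_j²) · (Σ_{j∈ℤ} ⟨j⟩^{2ε} N_j²)^{1/2} · (Σ_{k∈ℤ} P_k²)^{1/2}, where all sums are taken in [0,∞]. -/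
/-!
Pairing the four terms of the numerator of `φ` in two ways, and using that `x ↦ ⟨x⟩^{2r}` is
`2r`-Hölder with constant `1`, bounds it by
`2 min(|k - j₁|, |j₁ - j₂|)^{2r} ≤ 2 |k - j₁|^r |j₁ - j₂|^r`, while its denominator is
`2 (k - j₁)(j₁ - j₂)`. Hence `|φ| ≤ w(k - j₁) w(j₁ - j₂)` with `w(a) = |a|^{r-1}`, which is
square summable exactly when `r < 1/2`. In the coordinates `a = k - j₁`, `j = j₁`, `b = j₁ - j₂`
the sum is then bounded by Cauchy–Schwarz successively in `a`, in `j` and in `b`. Since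
`⟨j⟩^{2ε} ≥ 1`, the estimate even holds with `(Σ N_j²)^{1/2}` in place of the weighted factor.
-/

open scoped ENNReal

/-- The weight `φ_{k,j₁,j₂,j₃} = (⟨k⟩^{2r} - ⟨j₁⟩^{2r} + ⟨j₂⟩^{2r} - ⟨j₃⟩^{2r}) /
(k² - j₁² + j₂² - j₃²)` with `j₃ = k - j₁ + j₂`. -/
noncomputable def phiWeight (r : ℝ) (p : ℤ × ℤ × ℤ) : ℝ :=
  (jbr p.1 ^ (2*r) - jbr p.2.1 ^ (2*r) + jbr p.2.2 ^ (2*r)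
      - jbr (p.1 - p.2.1 + p.2.2 : ℤ) ^ (2*r))
    / ((p.1 : ℝ)^2 - (p.2.1 : ℝ)^2 + (p.2.2 : ℝ)^2 - ((p.1 - p.2.1 + p.2.2 : ℤ) : ℝ)^2)

lemma jbr_eq_norm (x : ℝ) : jbr x = ‖(⟨1, x⟩ : ℂ)‖ := by
  simp [jbr, Complex.norm_eq_sqrt_sq_add_sq]

lemma one_le_jbr (x : ℝ) : 1 ≤ jbr x :=
  Real.one_le_sqrt.2 (le_add_of_nonneg_right (sq_nonneg x))

lemma abs_jbr_sub_jbr_le (x y : ℝ) : |jbr x - jbr y| ≤ |x - y| := by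
  rw [jbr_eq_norm, jbr_eq_norm]
  refine (abs_norm_sub_norm_le _ _).trans_eq ?_
  simp [Complex.norm_eq_sqrt_sq_add_sq, Real.sqrt_sq_eq_abs]

lemma abs_rpow_sub_rpow_le {u v p : ℝ} (hu : 0 ≤ u) (hv : 0 ≤ v) (hp0 : 0 ≤ p)
    (hp1 : p ≤ 1) :
    |u ^ p - v ^ p| ≤ |u - v| ^ p := by
  wlog hvu : v ≤ u generalizing u v
  · rw [abs_sub_comm, abs_sub_comm u]; exact this hv hu (le_of_not_ge hvu)
  have hmono : v ^ p ≤ u ^ p := Real.rpow_le_rpow hv hvu hp0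
  have hsub := Real.rpow_add_le_add_rpow (sub_nonneg.2 hvu) hv hp0 hp1
  rw [sub_add_cancel] at hsub
  rw [abs_of_nonneg (sub_nonneg.2 hmono), abs_of_nonneg (sub_nonneg.2 hvu)]
  linarith

lemma abs_jbr_rpow_sub_jbr_rpow_le {s : ℝ} (hs0 : 0 ≤ s) (hs1 : s ≤ 1) (x y : ℝ) :
    |jbr x ^ s - jbr y ^ s| ≤ |x - y| ^ s :=
  (abs_rpow_sub_rpow_le (Real.sqrt_nonneg _) (Real.sqrt_nonneg _) hs0 hs1).trans
    (Real.rpow_le_rpow (abs_nonneg _) (abs_jbr_sub_jbr_le x y) hs0)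

lemma le_rpow_mul_rpow_of_le_of_le {x a b r : ℝ} (ha : 0 ≤ a) (hb : 0 ≤ b) (hr : 0 ≤ r)
    (hxa : x ≤ a ^ (2 * r)) (hxb : x ≤ b ^ (2 * r)) : x ≤ a ^ r * b ^ r := by
  rw [two_mul, Real.rpow_add_of_nonneg ha hr hr] at hxa
  rw [two_mul, Real.rpow_add_of_nonneg hb hr hr] at hxb
  rcases le_total a b with hab | hba
  · exact hxa.trans (by gcongr)
  · exact hxb.trans (by gcongr)

lemma abs_jbr_rpow_alternating_le_left {s : ℝ} (hs0 : 0 ≤ s) (hs1 : s ≤ 1) (x y z : ℝ) :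
    |jbr x ^ s - jbr y ^ s + jbr z ^ s - jbr (x - y + z) ^ s| ≤ 2 * |x - y| ^ s := by
  have hxy := abs_jbr_rpow_sub_jbr_rpow_le hs0 hs1 x y
  have hzu := abs_jbr_rpow_sub_jbr_rpow_le hs0 hs1 z (x - y + z)
  rw [show z - (x - y + z) = -(x - y) by ring, abs_neg] at hzu
  calc _ = |(jbr x ^ s - jbr y ^ s) + (jbr z ^ s - jbr (x - y + z) ^ s)| := by ring_nf
    _ ≤ _ := (abs_add_le _ _).trans (by linarith)

lemma abs_jbr_rpow_alternating_le_right {s : ℝ} (hs0 : 0 ≤ s) (hs1 : s ≤ 1) (x y z : ℝ) :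
    |jbr x ^ s - jbr y ^ s + jbr z ^ s - jbr (x - y + z) ^ s| ≤ 2 * |y - z| ^ s := by
  have hxu := abs_jbr_rpow_sub_jbr_rpow_le hs0 hs1 x (x - y + z)
  have hyz := abs_jbr_rpow_sub_jbr_rpow_le hs0 hs1 y z
  rw [show x - (x - y + z) = y - z by ring] at hxu
  calc _ = |(jbr x ^ s - jbr (x - y + z) ^ s) - (jbr y ^ s - jbr z ^ s)| := by ring_nf
    _ ≤ _ := (abs_sub _ _).trans (by linarith)

lemma abs_phiWeight_le {r : ℝ} (hr0 : 0 ≤ r) (hr : r ≤ 1 / 2) {k j₁ j₂ : ℤ}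
    (h₁ : k ≠ j₁) (h₂ : j₁ ≠ j₂) :
    |phiWeight r (k, j₁, j₂)| ≤ |(k : ℝ) - j₁| ^ (r - 1) * |(j₁ : ℝ) - j₂| ^ (r - 1) := by
  have hA : |(k : ℝ) - j₁| ≠ 0 := by simpa [sub_eq_zero] using h₁
  have hB : |(j₁ : ℝ) - j₂| ≠ 0 := by simpa [sub_eq_zero] using h₂
  have hnum := le_rpow_mul_rpow_of_le_of_le (abs_nonneg _) (abs_nonneg _) hr0
    ((div_le_iff₀' two_pos).2 <| abs_jbr_rpow_alternating_le_left (by positivity) (by linarith)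
      (k : ℝ) j₁ j₂)
    ((div_le_iff₀' two_pos).2 <| abs_jbr_rpow_alternating_le_right (by positivity) (by linarith)
      (k : ℝ) j₁ j₂)
  have hden : (k : ℝ) ^ 2 - (j₁ : ℝ) ^ 2 + (j₂ : ℝ) ^ 2 - ((k : ℝ) - j₁ + j₂) ^ 2
      = 2 * ((k : ℝ) - j₁) * ((j₁ : ℝ) - j₂) := by ring
  rw [phiWeight]
  push_cast
  rw [hden, abs_div, abs_mul, abs_mul, abs_two, Real.rpow_sub_one hA, Real.rpow_sub_one hB,
    div_mul_div_comm, mul_assoc, ← div_div]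
  gcongr

lemma ENNReal.inner_le_L2_mul_L2_tsum {ι : Type*} (f g : ι → ℝ≥0∞) :
    ∑' i, f i * g i ≤ (∑' i, f i ^ 2) ^ ((1:ℝ)/2) * (∑' i, g i ^ 2) ^ ((1:ℝ)/2) := by
  rw [ENNReal.tsum_eq_iSup_sum]
  refine iSup_le fun s => ?_
  have := ENNReal.inner_le_Lp_mul_Lq s f g Real.HolderConjugate.two_two
  simp only [ENNReal.rpow_two] at this
  exact this.trans (by gcongr <;> exact ENNReal.sum_le_tsum s)

lemma ENNReal.rpow_half_mul_rpow_half (x : ℝ≥0∞) : x ^ ((1:ℝ)/2) * x ^ ((1:ℝ)/2) = x := by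
  rw [← ENNReal.rpow_add_of_nonneg _ _ (by norm_num) (by norm_num)]
  norm_num

lemma ENNReal.rpow_half_sq (x : ℝ≥0∞) : (x ^ ((1:ℝ)/2)) ^ 2 = x := by
  rw [sq, ENNReal.rpow_half_mul_rpow_half]

section Trilinear

variable {G : Type*} [AddCommGroup G] (w n q : G → ℝ≥0∞)

def diffCoordsEquiv : G × G × G ≃ G × G × G where
  toFun x := (x.2.1 + x.2.2, x.2.1, x.2.1 - x.1)
  invFun p := (p.2.1 - p.2.2, p.2.1, p.1 - p.2.1)
  left_inv x := by simp
  right_inv p := by simp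

lemma tsum_mul_comp_sub_le (b : G) : ∑' j, n j * n (j - b) ≤ ∑' j, n j ^ 2 := by
  have hshift : ∑' j, n (j - b) ^ 2 = ∑' j, n j ^ 2 :=
    (Equiv.subRight b).tsum_eq fun j => n j ^ 2
  refine (ENNReal.inner_le_L2_mul_L2_tsum _ _).trans_eq ?_
  rw [hshift, ENNReal.rpow_half_mul_rpow_half]

lemma tsum_tsum_comp_sub_mul_sq :
    ∑' b, ∑' m, (n (m - b) * q m) ^ 2 = (∑' j, n j ^ 2) * ∑' m, q m ^ 2 := by
  simp_rw [mul_pow]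
  rw [ENNReal.tsum_comm, ← ENNReal.tsum_mul_left]
  refine tsum_congr fun m => ?_
  have hreflect : ∑' b, n (m - b) ^ 2 = ∑' j, n j ^ 2 :=
    (Equiv.subLeft m).tsum_eq fun j => n j ^ 2
  rw [ENNReal.tsum_mul_right, hreflect]

lemma tsum_mul_comp_add_le (j b : G) :
    ∑' a, w a * (n (j + a - b) * q (j + a))
      ≤ (∑' a, w a ^ 2) ^ ((1:ℝ)/2)
          * (∑' m, (n (m - b) * q m) ^ 2) ^ ((1:ℝ)/2) := by
  have hshift :
      ∑' a, (n (j + a - b) * q (j + a)) ^ 2 = ∑' m, (n (m - b) * q m) ^ 2 :=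
    (Equiv.addLeft j).tsum_eq fun m => (n (m - b) * q m) ^ 2
  refine (ENNReal.inner_le_L2_mul_L2_tsum _ _).trans_eq ?_
  rw [hshift]

theorem tsum_trilinear_le :
    ∑' p : G × G × G, w (p.1 - p.2.1) * w (p.2.1 - p.2.2)
        * (n p.2.1 * n p.2.2 * n (p.1 - p.2.1 + p.2.2) * q p.1)
      ≤ (∑' a, w a ^ 2) * (∑' j, n j ^ 2) * (∑' j, n j ^ 2) ^ ((1:ℝ)/2)
          * (∑' k, q k ^ 2) ^ ((1:ℝ)/2) := by
  set W := ∑' a, w a ^ 2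
  set E := ∑' j, n j ^ 2
  set g : G → ℝ≥0∞ := fun b => (∑' m, (n (m - b) * q m) ^ 2) ^ ((1:ℝ)/2)
  calc _ = ∑' (b) (j) (a),
        w b * (n j * n (j - b) * (w a * (n (j + a - b) * q (j + a)))) := by
        rw [← diffCoordsEquiv.tsum_eq]
        simp only [ENNReal.tsum_prod']
        refine tsum_congr fun b => tsum_congr fun j => tsum_congr fun a => ?_
        simp only [diffCoordsEquiv, Equiv.coe_fn_mk, add_sub_cancel_left, sub_sub_cancel,
          show a + (j - b) = j + a - b by abel]
        ring
    _ ≤ ∑' (b) (j), w b * (n j * n (j - b) * (W ^ ((1:ℝ)/2) * g b)) := by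
        simp only [ENNReal.tsum_mul_left]
        gcongr with b j
        exact tsum_mul_comp_add_le w n q j b
    _ ≤ ∑' b, w b * (E * (W ^ ((1:ℝ)/2) * g b)) := by
        simp only [ENNReal.tsum_mul_left, ENNReal.tsum_mul_right]
        gcongr with b
        exact tsum_mul_comp_sub_le n b
    _ = W ^ ((1:ℝ)/2) * E * ∑' b, w b * g b := by
        rw [← ENNReal.tsum_mul_left]
        exact tsum_congr fun b => by ring
    _ ≤ W ^ ((1:ℝ)/2) * E * (W ^ ((1:ℝ)/2) * (E * ∑' k, q k ^ 2) ^ ((1:ℝ)/2)) := by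
        gcongr
        refine (ENNReal.inner_le_L2_mul_L2_tsum _ _).trans_eq ?_
        simp only [g, ENNReal.rpow_half_sq, tsum_tsum_comp_sub_mul_sq]
        rfl
    _ = _ := by
        rw [ENNReal.mul_rpow_of_nonneg _ _ (by norm_num)]
        conv_rhs => rw [← ENNReal.rpow_half_mul_rpow_half W]
        ring

end Trilinear

lemma summable_abs_int_rpow_two_mul_sub_one {r : ℝ} (hr : r < 1 / 2) :
    Summable fun a : ℤ => |(a : ℝ)| ^ (2 * (r - 1)) := by
  simpa [show -(2 - 2 * r) = 2 * (r - 1) by ring] using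
    Real.summable_abs_int_rpow (b := 2 - 2 * r) (by linarith)

lemma tsum_ofReal_abs_int_rpow_sq {r : ℝ} (hr : r < 1 / 2) :
    ∑' a : ℤ, ENNReal.ofReal (|(a : ℝ)| ^ (r - 1)) ^ 2
      = ENNReal.ofReal (∑' a : ℤ, |(a : ℝ)| ^ (2 * (r - 1))) := by
  rw [ENNReal.ofReal_tsum_of_nonneg (fun _ => by positivity)
    (summable_abs_int_rpow_two_mul_sub_one hr)]
  refine tsum_congr fun a => ?_
  rw [← ENNReal.ofReal_pow (by positivity), ← Real.rpow_natCast,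
    ← Real.rpow_mul (abs_nonneg _)]
  norm_num [mul_comm]

lemma ite_ofReal_phiWeight_mul_le {r : ℝ} (hr0 : 0 ≤ r) (hr : r ≤ 1 / 2) {N P : ℤ → ℝ}
    (hN : ∀ j, 0 ≤ N j) (hP : ∀ k, 0 ≤ P k) (p : ℤ × ℤ × ℤ) :
    (if (p.1 - p.2.1) * (p.2.1 - p.2.2) ≠ 0 then
        ENNReal.ofReal (|phiWeight r p| * N p.2.1 * N p.2.2 * N (p.1 - p.2.1 + p.2.2) * P p.1)
      else 0)
      ≤ ENNReal.ofReal (|((p.1 - p.2.1 : ℤ) : ℝ)| ^ (r - 1))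
          * ENNReal.ofReal (|((p.2.1 - p.2.2 : ℤ) : ℝ)| ^ (r - 1))
          * (ENNReal.ofReal (N p.2.1) * ENNReal.ofReal (N p.2.2)
            * ENNReal.ofReal (N (p.1 - p.2.1 + p.2.2)) * ENNReal.ofReal (P p.1)) := by
  obtain ⟨k, j₁, j₂⟩ := p
  split_ifs with h
  · obtain ⟨h₁, h₂⟩ := mul_ne_zero_iff.1 h
    have hφ : ENNReal.ofReal |phiWeight r (k, j₁, j₂)|
        ≤ ENNReal.ofReal (|((k - j₁ : ℤ) : ℝ)| ^ (r - 1))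
          * ENNReal.ofReal (|((j₁ - j₂ : ℤ) : ℝ)| ^ (r - 1)) := by
      rw [← ENNReal.ofReal_mul (by positivity)]
      push_cast
      exact ENNReal.ofReal_le_ofReal
        (abs_phiWeight_le hr0 hr (sub_ne_zero.1 h₁) (sub_ne_zero.1 h₂))
    calc _ = ENNReal.ofReal |phiWeight r (k, j₁, j₂)| * (ENNReal.ofReal (N j₁)
          * ENNReal.ofReal (N j₂) * ENNReal.ofReal (N (k - j₁ + j₂))
          * ENNReal.ofReal (P k)) := by
          simp only [ENNReal.ofReal_mul' (hN _), ENNReal.ofReal_mul' (hP _)]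
          ring
      _ ≤ _ := by gcongr
  · exact zero_le

/-- for `0 < r < 1/2` and `ε > 0` there is `C > 0` such that for all
nonnegative families `N, P`,
`Σ_{(k,j₁,j₂), (k-j₁)(j₁-j₂)≠0} |φ| N_{j₁} N_{j₂} N_{j₃} P_k
  ≤ C (Σ N_j²) (Σ ⟨j⟩^{2ε} N_j²)^{1/2} (Σ P_k²)^{1/2}`,
all sums taken in `[0,∞]`. -/
theorem stmt9 (r ε : ℝ) (hr0 : 0 < r) (hr : r < 1/2) (hε : 0 < ε) :
    ∃ C : ℝ, 0 < C ∧ ∀ N P : ℤ → ℝ, (∀ j : ℤ, 0 ≤ N j) → (∀ k : ℤ, 0 ≤ P k) →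
      (∑' p : ℤ × ℤ × ℤ,
          (if (p.1 - p.2.1) * (p.2.1 - p.2.2) ≠ 0 then
            ENNReal.ofReal (|phiWeight r p| * N p.2.1 * N p.2.2
              * N (p.1 - p.2.1 + p.2.2) * P p.1)
          else 0))
        ≤ ENNReal.ofReal C * (∑' j : ℤ, ENNReal.ofReal ((N j)^2))
            * (∑' j : ℤ, ENNReal.ofReal (jbr j ^ (2*ε) * (N j)^2)) ^ ((1:ℝ)/2)
            * (∑' k : ℤ, ENNReal.ofReal ((P k)^2)) ^ ((1:ℝ)/2) := by
  have hC : 0 < ∑' a : ℤ, |(a : ℝ)| ^ (2 * (r - 1)) :=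
    (summable_abs_int_rpow_two_mul_sub_one hr).tsum_pos (fun _ => by positivity) 1 (by norm_num)
  refine ⟨_, hC, fun N P hN hP => ?_⟩
  have hNF : ∑' j : ℤ, ENNReal.ofReal (N j ^ 2)
      ≤ ∑' j : ℤ, ENNReal.ofReal (jbr j ^ (2 * ε) * N j ^ 2) := by
    gcongr with j
    exact le_mul_of_one_le_left (sq_nonneg _) (Real.one_le_rpow (one_le_jbr j) (by positivity))
  calc _ ≤ _ := ENNReal.tsum_le_tsum (ite_ofReal_phiWeight_mul_le hr0.le hr.le hN hP)
    _ ≤ _ := tsum_trilinear_le (fun a : ℤ => ENNReal.ofReal (|(a : ℝ)| ^ (r - 1)))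
        (fun j => ENNReal.ofReal (N j)) (fun k => ENNReal.ofReal (P k))
    _ ≤ _ := by
      simp only [← ENNReal.ofReal_pow (hN _), ← ENNReal.ofReal_pow (hP _),
        tsum_ofReal_abs_int_rpow_sq hr]
      gcongr
end

section
/- A nonzero periodic profile has infinite weighted L² norm at and above the critical weight: let h : ℝ → ℂ be measurable and 2π-periodic (h(ξ + 2π) = h(ξ) for almost every ξ), and suppose h is not almost everywhere zero. Then for every real s ≥ −1/2, one has ∫_ℝ (1 + ξ²)^{s} |h(ξ)|² dξ = ∞. -/
/-!
Cut `ℝ` into the periods `[2πn, 2π(n+1))`. By periodicity `|h|²` has the same integral `A` over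
each of them, and `A ≠ 0` because `h` is not a.e. zero. For `s ≥ -1/2` the weight satisfies
`(1 + ξ²)^s ≥ (1 + |ξ|)⁻¹`, which is of order `1/n` on the `n`-th period, so the weighted integral
dominates `A` times the harmonic series.
-/

open Real MeasureTheory Set
open scoped ENNReal

section Periodic

variable {g : ℝ → ℝ≥0∞} {T : ℝ}

theorem setLIntegral_Ico_add_eq_of_ae_periodic (hg : ∀ᵐ x, g (x + T) = g x) (a b : ℝ) :
    ∫⁻ x in Ico (a + T) (b + T), g x = ∫⁻ x in Ico a b, g x := by
  rw [← image_add_const_Ico, ← (measurePreserving_add_right volume T).setLIntegral_comp_emb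
    (measurableEmbedding_addRight T)]
  exact setLIntegral_congr_fun_ae measurableSet_Ico (hg.mono fun x hx _ => hx)

theorem setLIntegral_Ico_int_mul_eq_of_ae_periodic (hg : ∀ᵐ x, g (x + T) = g x) (n : ℤ) :
    ∫⁻ x in Ico (n * T) ((n + 1) * T), g x = ∫⁻ x in Ico 0 T, g x := by
  induction n using Int.induction_on with
  | zero => simp
  | succ n ih =>
    rw [← ih]
    convert setLIntegral_Ico_add_eq_of_ae_periodic hg _ _ using 4 <;> push_cast <;> ring
  | pred n ih =>
    rw [← ih]
    convert (setLIntegral_Ico_add_eq_of_ae_periodic hg _ _).symm using 4 <;> push_cast <;> ring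

theorem lintegral_eq_tsum_setLIntegral_Ico_int_mul (hT : 0 < T) (f : ℝ → ℝ≥0∞) :
    ∫⁻ x, f x = ∑' n : ℤ, ∫⁻ x in Ico (n * T) ((n + 1) * T), f x := by
  have hcover := iUnion_Ico_zsmul hT
  have hdisj := pairwise_disjoint_Ico_zsmul T
  simp only [zsmul_eq_mul, Int.cast_add, Int.cast_one] at hcover hdisj
  rw [← setLIntegral_univ, ← hcover, lintegral_iUnion (fun _ => measurableSet_Ico) hdisj]

theorem setLIntegral_Ico_ne_zero_of_ae_periodic (hgm : AEMeasurable g) (hT : 0 < T)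
    (hg : ∀ᵐ x, g (x + T) = g x) (hne : ¬ g =ᵐ[volume] 0) :
    ∫⁻ x in Ico 0 T, g x ≠ 0 := by
  intro hzero
  refine hne ((lintegral_eq_zero_iff' hgm).1 ?_)
  simp [lintegral_eq_tsum_setLIntegral_Ico_int_mul hT,
    setLIntegral_Ico_int_mul_eq_of_ae_periodic hg, hzero]

theorem lintegral_mul_eq_top_of_ae_periodic (hgm : AEMeasurable g) (hT : 0 < T)
    (hg : ∀ᵐ x, g (x + T) = g x) (hne : ¬ g =ᵐ[volume] 0) {w : ℝ → ℝ≥0∞} {c : ℕ → ℝ≥0∞}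
    (hc : ∑' n, c n = ∞) (hw : ∀ n : ℕ, ∀ x ∈ Ico (n * T) ((n + 1) * T), c n ≤ w x) :
    ∫⁻ x, w x * g x = ∞ := by
  have hperiod (n : ℕ) :
      c n * ∫⁻ x in Ico 0 T, g x ≤ ∫⁻ x in Ico (n * T) ((n + 1) * T), w x * g x := by
    have hA := setLIntegral_Ico_int_mul_eq_of_ae_periodic hg n
    push_cast at hA
    rw [← hA, ← lintegral_const_mul'' _ hgm.restrict]
    exact setLIntegral_mono' measurableSet_Ico fun x hx => mul_le_mul_left (hw n x hx) _
  refine top_le_iff.1 ?_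
  calc ∞ = ∑' n, c n * ∫⁻ x in Ico 0 T, g x := by
        rw [ENNReal.tsum_mul_right, hc, ENNReal.top_mul
          (setLIntegral_Ico_ne_zero_of_ae_periodic hgm hT hg hne)]
    _ ≤ ∑' n : ℕ, ∫⁻ x in Ico (n * T) ((n + 1) * T), w x * g x :=
        ENNReal.tsum_le_tsum hperiod
    _ ≤ ∑' n : ℤ, ∫⁻ x in Ico (n * T) ((n + 1) * T), w x * g x :=
        ENNReal.tsum_comp_le_tsum_of_injective Nat.cast_injective
          (fun n : ℤ => ∫⁻ x in Ico (n * T) ((n + 1) * T), w x * g x)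
    _ = ∫⁻ x, w x * g x := (lintegral_eq_tsum_setLIntegral_Ico_int_mul hT _).symm

end Periodic

theorem inv_one_add_abs_le_rpow_one_add_sq {s : ℝ} (hs : -1 / 2 ≤ s) (ξ : ℝ) :
    (1 + |ξ|)⁻¹ ≤ (1 + ξ ^ 2) ^ s := by
  have hsqrt : √(1 + ξ ^ 2) ≤ 1 + |ξ| := by
    rw [sqrt_le_left (by positivity)]
    nlinarith [abs_nonneg ξ, sq_abs ξ]
  calc (1 + |ξ|)⁻¹ ≤ (√(1 + ξ ^ 2))⁻¹ := inv_anti₀ (by positivity) hsqrt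
    _ = (1 + ξ ^ 2) ^ (-1 / 2 : ℝ) := by
        rw [sqrt_eq_rpow, neg_div, rpow_neg (by positivity)]
    _ ≤ (1 + ξ ^ 2) ^ s := rpow_le_rpow_of_exponent_le (by nlinarith [sq_nonneg ξ]) hs

theorem tsum_ofReal_inv_natCast_add_one_eq_top :
    ∑' n : ℕ, ENNReal.ofReal ((n + 1 : ℝ)⁻¹) = ∞ := by
  by_contra hfin
  have hsum := ENNReal.summable_toReal hfin
  have hterm (n : ℕ) : (ENNReal.ofReal ((n + 1 : ℝ)⁻¹)).toReal = (n + 1 : ℝ)⁻¹ :=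
    ENNReal.toReal_ofReal (by positivity)
  simp only [hterm] at hsum
  exact Real.not_summable_natCast_inv ((summable_nat_add_iff 1).1 (by exact_mod_cast hsum))

/-- a measurable `2π`-periodic function `h : ℝ → ℂ` that is not a.e. zero
has infinite weighted `L²` norm `∫ (1+ξ²)^s |h(ξ)|² dξ = ∞` for every real `s ≥ -1/2`. -/
theorem stmt16 (h : ℝ → ℂ) (hmeas : Measurable h)
    (hper : ∀ᵐ ξ ∂(volume : Measure ℝ), h (ξ + 2 * π) = h ξ)
    (hne : ¬ (h =ᵐ[(volume : Measure ℝ)] 0)) :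
    ∀ s : ℝ, -1/2 ≤ s →
      ∫⁻ ξ : ℝ, ENNReal.ofReal ((1 + ξ^2) ^ s * (‖h ξ‖)^2) = ⊤ := by
  intro s hs
  have hsplit (ξ : ℝ) : ENNReal.ofReal ((1 + ξ ^ 2) ^ s * ‖h ξ‖ ^ 2)
      = ENNReal.ofReal ((1 + ξ ^ 2) ^ s) * ‖h ξ‖ₑ ^ 2 := by
    rw [ENNReal.ofReal_mul (by positivity), ENNReal.ofReal_pow (norm_nonneg _),
      ofReal_norm]
  have hweight (n : ℕ) (ξ : ℝ) (hξ : ξ ∈ Ico (n * (2 * π)) ((n + 1) * (2 * π))) :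
      ENNReal.ofReal ((1 + 2 * π)⁻¹) * ENNReal.ofReal ((n + 1 : ℝ)⁻¹)
        ≤ ENNReal.ofReal ((1 + ξ ^ 2) ^ s) := by
    have hξ0 : 0 ≤ ξ := le_trans (by positivity) hξ.1
    have hlen : 1 + |ξ| ≤ (1 + 2 * π) * (n + 1) := by
      rw [abs_of_nonneg hξ0]; nlinarith [hξ.2, pi_pos, (n.cast_nonneg : (0 : ℝ) ≤ n)]
    rw [← ENNReal.ofReal_mul (by positivity), ← mul_inv]
    exact ENNReal.ofReal_le_ofReal
      ((inv_anti₀ (by positivity) hlen).trans (inv_one_add_abs_le_rpow_one_add_sq hs ξ))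
  simp_rw [hsplit]
  refine lintegral_mul_eq_top_of_ae_periodic (hmeas.enorm.pow_const 2).aemeasurable
    (by positivity) (hper.mono fun ξ hξ => by rw [hξ]) ?_ ?_ hweight
  · refine mt (fun hzero => ?_) hne
    filter_upwards [hzero] with ξ hξ
    simpa using hξ
  · rw [ENNReal.tsum_mul_left, tsum_ofReal_inv_natCast_add_one_eq_top,
      ENNReal.mul_top (by positivity)]
end
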